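/- Fix a positive integer m, a Dyck word w of length 2m, and k ∈ [2m]. A graph H' on the vertex set [k] satisfies H' = H[k] for some matching H on [2m] with base w avoiding every element of 𝒞 = {C_p : p ≥ 3} if and only if the following three conditions hold: (a) H' is consistent with w; (b) H' avoids every element of 𝒞; (c) for every p ≥ 3 there is no sequence of vertices x_1 < x_2 < ... < x_{2p-1} in [k] such that x_{2p-3} is a stub of H' and the subgraph of H' induced by {x_1,...,x_{2p-1}} has exactly the edges {x_{2i-1}, x_{2i+2}} for 1 ≤ i ≤ p-2 together with the edge {x_2, x_{2p-1}}. -/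

import Mathlib

/-- `G` is a matching on the vertex set `[n] = {1,…,n}`:
every edge has both endpoints in `[n]`, and every vertex of `[n]` has exactly one neighbour. -/
def IsMatchingOn (n : ℕ) (G : SimpleGraph ℕ) : Prop :=
  (∀ u v : ℕ, G.Adj u v → 1 ≤ u ∧ u ≤ n ∧ 1 ≤ v ∧ v ≤ n) ∧
  (∀ v : ℕ, 1 ≤ v → v ≤ n → ∃! u : ℕ, G.Adj v u)

/-- `G` contains `H`: there is a monotone edge-preserving injection from the
vertices of `H` to those of `G`. -/
def ContainsPat (G H : SimpleGraph ℕ) : Prop :=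
  ∃ f : ℕ → ℕ, StrictMono f ∧ ∀ u v : ℕ, H.Adj u v → G.Adj (f u) (f v)

/-- `w` (on positions `1,…,n`) is a Dyck word of length `n`: exactly half of its letters
are `1` (`true`), and every prefix has at most half of its letters equal to `1`. -/
def IsDyckWord (n : ℕ) (w : ℕ → Bool) : Prop :=
  2 * ((Finset.Icc 1 n).filter fun i => w i = true).card = n ∧
  ∀ k : ℕ, k ≤ n → 2 * ((Finset.Icc 1 k).filter fun i => w i = true).card ≤ k

/-- The matching `G` on `[n]` has base `w`: `w i = 1` iff `i` is an r-vertex. -/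
def HasBase (n : ℕ) (G : SimpleGraph ℕ) (w : ℕ → Bool) : Prop :=
  ∀ i : ℕ, 1 ≤ i → i ≤ n → (w i = true ↔ ∃ j : ℕ, j < i ∧ G.Adj i j)

/-- The matching `M_123` on `[6]`, with edges `{1,4},{2,5},{3,6}`. -/
def M123 : SimpleGraph ℕ := SimpleGraph.fromRel fun u v => (u, v) ∈ [(1,4),(2,5),(3,6)]
/-- The matching `M_132` on `[6]`, with edges `{1,4},{2,6},{3,5}`. -/
def M132 : SimpleGraph ℕ := SimpleGraph.fromRel fun u v => (u, v) ∈ [(1,4),(2,6),(3,5)]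
/-- The matching `M_213` on `[6]`, with edges `{1,5},{2,4},{3,6}`. -/
def M213 : SimpleGraph ℕ := SimpleGraph.fromRel fun u v => (u, v) ∈ [(1,5),(2,4),(3,6)]
/-- The matching `M_231` on `[6]`, with edges `{1,5},{2,6},{3,4}`. -/
def M231 : SimpleGraph ℕ := SimpleGraph.fromRel fun u v => (u, v) ∈ [(1,5),(2,6),(3,4)]
/-- The matching `M_321` on `[6]`, with edges `{1,6},{2,5},{3,4}`. -/
def M321 : SimpleGraph ℕ := SimpleGraph.fromRel fun u v => (u, v) ∈ [(1,6),(2,5),(3,4)]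

/-- The matching `C_k` on `[2k]`, with edges `{2i-1, 2i+2}` for `1 ≤ i < k`
together with the edge `{2, 2k-1}`. -/
def Ck (k : ℕ) : SimpleGraph ℕ :=
  SimpleGraph.fromRel fun u v =>
    (∃ i : ℕ, 1 ≤ i ∧ i < k ∧ u = 2*i - 1 ∧ v = 2*i + 2) ∨ (u = 2 ∧ v = 2*k - 1)

/-- `G[k]`: the subgraph of `G` induced by the vertex set `[k]`. -/
def restrictG (G : SimpleGraph ℕ) (k : ℕ) : SimpleGraph ℕ :=
  SimpleGraph.fromRel fun u v => G.Adj u v ∧ u ≤ k ∧ v ≤ k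

/-- A stub of a graph on `[k]`: an isolated vertex. -/
def IsStubOn (k : ℕ) (G : SimpleGraph ℕ) (v : ℕ) : Prop :=
  1 ≤ v ∧ v ≤ k ∧ ∀ u : ℕ, ¬ G.Adj v u

/-- The relation `∼`: `u ∼ v` iff `u = v` or some edge `{x,y}` satisfies
`x < u < y` and `x < v < y`. -/
def SimRel (G : SimpleGraph ℕ) (u v : ℕ) : Prop :=
  u = v ∨ ∃ x y : ℕ, G.Adj x y ∧ x < u ∧ u < y ∧ x < v ∧ v < y

/-- The edges `{a,b}` and `{c,d}` (with `a < b`, `c < d`) cross. -/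
def EdgesCross (a b c d : ℕ) : Prop :=
  (a < c ∧ c < b ∧ b < d) ∨ (c < a ∧ a < d ∧ d < b)

/-- The relation `≈`: `u ≈ v` iff `u = v` or there is a sequence of edges
`e_1,…,e_p` (`p ≥ 1`), consecutive ones crossing, with `e_1` spanning `u` and `e_p` spanning `v`. -/
def ApproxRel (G : SimpleGraph ℕ) (u v : ℕ) : Prop :=
  u = v ∨ ∃ p : ℕ, 1 ≤ p ∧ ∃ x y : ℕ → ℕ,
    (∀ i : ℕ, i < p → x i < y i ∧ G.Adj (x i) (y i)) ∧
    (∀ i : ℕ, i + 1 < p → EdgesCross (x i) (y i) (x (i+1)) (y (i+1))) ∧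
    x 0 < u ∧ u < y 0 ∧ x (p-1) < v ∧ v < y (p-1)

namespace Stmt7Aux

open Finset

/-- count of elements of `S` that are `≤ t`. -/
def cnt (S : Finset ℕ) (t : ℕ) : ℕ := (S.filter (· ≤ t)).card

lemma cnt_succ (S : Finset ℕ) (t : ℕ) :
    cnt S (t+1) = cnt S t + (if t+1 ∈ S then 1 else 0) := by
  unfold cnt
  have hsplit : S.filter (· ≤ t+1) = S.filter (· ≤ t) ∪ S.filter (· = t+1) := by
    ext a
    simp only [Finset.mem_filter, Finset.mem_union]
    constructor
    · rintro ⟨ha, h⟩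
      rcases Nat.lt_or_ge a (t+1) with h' | h'
      · exact Or.inl ⟨ha, by omega⟩
      · exact Or.inr ⟨ha, by omega⟩
    · rintro (⟨ha, h⟩ | ⟨ha, h⟩) <;> exact ⟨ha, by omega⟩
  rw [hsplit, Finset.card_union_of_disjoint, Finset.filter_eq']
  · split <;> simp
  · rw [Finset.disjoint_left]
    intro a ha hb
    simp only [Finset.mem_filter] at ha hb
    omega

/-- the height function of the pair `(A,B)`. -/
def hgt (A B : Finset ℕ) (t : ℕ) : ℤ := (cnt A t : ℤ) - (cnt B t : ℤ)

lemma hgt_succ (A B : Finset ℕ) (t : ℕ) :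
    hgt A B (t+1) = hgt A B t + (if t+1 ∈ A then 1 else 0) - (if t+1 ∈ B then 1 else 0) := by
  unfold hgt
  rw [cnt_succ, cnt_succ]
  push_cast
  split_ifs <;> ring

lemma hgt_zero (A B : Finset ℕ) (hA1 : ∀ a ∈ A, 1 ≤ a) (hB1 : ∀ b ∈ B, 1 ≤ b) :
    hgt A B 0 = 0 := by
  unfold hgt cnt
  rw [Finset.filter_false_of_mem, Finset.filter_false_of_mem]
  · simp
  · intro b hb; have := hB1 b hb; omega
  · intro a ha; have := hA1 a ha; omega

section Match

variable (A B : Finset ℕ)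
variable (hA1 : ∀ a ∈ A, 1 ≤ a) (hB1 : ∀ b ∈ B, 1 ≤ b) (hd : Disjoint A B)
variable (hdom : ∀ t, cnt B t ≤ cnt A t)

include hA1 hB1 hd hdom in
lemma exists_match {b : ℕ} (hb : b ∈ B) :
    ∃ a, a ∈ A ∧ a < b ∧ hgt A B (a-1) = hgt A B b ∧
      ∀ t, a ≤ t → t < b → hgt A B b < hgt A B t := by
  classical
  have hbA : b ∉ A := fun h => (Finset.disjoint_left.1 hd h) hb
  have hb1 : 1 ≤ b := hB1 b hb
  have hstep : hgt A B b = hgt A B (b-1) - 1 := by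
    have h := hgt_succ A B (b-1)
    rw [Nat.sub_add_cancel hb1] at h
    simp only [hbA, hb, if_true, if_false] at h
    omega
  have hnn : 0 ≤ hgt A B b := by
    have := hdom b; unfold hgt; omega
  set P : ℕ → Prop := fun t => hgt A B t ≤ hgt A B b with hP
  have hP0 : P 0 := by
    rw [hP]; simp only []
    rw [hgt_zero A B hA1 hB1]; exact hnn
  set t₀ := Nat.findGreatest P (b-1) with ht₀
  have hPt₀ : P t₀ := Nat.findGreatest_spec (Nat.zero_le _) hP0
  have hgr : ∀ t, t₀ < t → t ≤ b-1 → ¬ P t := fun t h1 h2 =>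
    Nat.findGreatest_is_greatest h1 h2
  have ht₀le : t₀ ≤ b - 1 := Nat.findGreatest_le _
  have hne : t₀ ≠ b - 1 := by
    intro h
    rw [h] at hPt₀
    simp only [hP] at hPt₀
    omega
  have ht₀lt : t₀ < b - 1 := lt_of_le_of_ne ht₀le hne
  refine ⟨t₀ + 1, ?_, by omega, ?_, ?_⟩
  · have hnP : ¬ P (t₀ + 1) := hgr _ (by omega) (by omega)
    have hstep' := hgt_succ A B t₀
    by_contra hA'
    simp only [hA', if_false] at hstep'
    simp only [hP, not_le] at hnP
    simp only [hP] at hPt₀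
    split_ifs at hstep' <;> omega
  · have hnP : ¬ P (t₀ + 1) := hgr _ (by omega) (by omega)
    have hstep' := hgt_succ A B t₀
    simp only [Nat.add_sub_cancel]
    simp only [hP, not_le] at hnP
    simp only [hP] at hPt₀
    split_ifs at hstep' <;> omega
  · intro t h1 h2
    have := hgr t (by omega) (by omega)
    simp only [hP, not_le] at this
    exact this

end Match

def PatPair (p u v : ℕ) : Prop :=
  (∃ i : ℕ, 1 ≤ i ∧ i < p ∧ u = 2*i - 1 ∧ v = 2*i + 2) ∨ (u = 2 ∧ v = 2*p - 1)

lemma ck_adj_iff (p u v : ℕ) :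
    (Ck p).Adj u v ↔ u ≠ v ∧ (PatPair p u v ∨ PatPair p v u) := by
  unfold Ck PatPair
  exact SimpleGraph.fromRel_adj _ u v

lemma pat_lt {p s t : ℕ} (hp : 3 ≤ p) (h : PatPair p s t) :
    1 ≤ s ∧ s < t ∧ t ≤ 2*p := by
  rcases h with ⟨i, h1, h2, rfl, rfl⟩ | ⟨rfl, rfl⟩ <;> omega

lemma ck_adj {p s t : ℕ} (hp : 3 ≤ p) (h : PatPair p s t) : (Ck p).Adj s t := by
  rw [ck_adj_iff]
  have := pat_lt hp h
  exact ⟨by omega, Or.inl h⟩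

lemma pat_cross {p s t : ℕ} (hp : 3 ≤ p) (h : PatPair p s t)
    (hne : ¬(s = 2*p - 3 ∧ t = 2*p)) :
    ∃ s' t', PatPair p s' t' ∧ s < s' ∧ s' < t ∧ t < t' := by
  rcases h with ⟨i, h1, h2, rfl, rfl⟩ | ⟨rfl, rfl⟩
  · have hi : i < p - 1 := by omega
    exact ⟨2*(i+1) - 1, 2*(i+1) + 2, Or.inl ⟨i+1, by omega, by omega, rfl, rfl⟩,
      by omega, by omega, by omega⟩
  · exact ⟨2*(p-1) - 1, 2*(p-1) + 2, Or.inl ⟨p-1, by omega, by omega, rfl, rfl⟩,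
      by omega, by omega, by omega⟩

def patPartner (p a : ℕ) : ℕ :=
  if a = 2 then 2*p - 1 else if a = 2*p - 1 then 2 else if a % 2 = 1 then a + 3 else a - 3

lemma patPartner_adj {p a : ℕ} (hp : 3 ≤ p) (h1 : 1 ≤ a) (h2 : a ≤ 2*p - 1) :
    PatPair p a (patPartner p a) ∨ PatPair p (patPartner p a) a := by
  unfold patPartner
  split_ifs with hc1 hc2 hc3
  · exact Or.inl (Or.inr ⟨hc1, rfl⟩)
  · subst hc2; exact Or.inr (Or.inr ⟨rfl, rfl⟩)
  · exact Or.inl (Or.inl ⟨(a+1)/2, by omega, by omega, by omega, by omega⟩)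
  · exact Or.inr (Or.inl ⟨(a-2)/2, by omega, by omega, by omega, by omega⟩)

lemma pat_unique {p a b : ℕ} (hp : 3 ≤ p) (h1 : 1 ≤ a) (hab : a < b) (h2 : b ≤ 2*p - 1)
    (hb : b = patPartner p a) :
    (∃ i : ℕ, 1 ≤ i ∧ i ≤ p - 2 ∧ a = 2*i - 1 ∧ b = 2*i + 2) ∨ (a = 2 ∧ b = 2*p - 1) := by
  unfold patPartner at hb
  split_ifs at hb with hc1 hc2 hc3
  · exact Or.inr ⟨hc1, hb⟩
  · omega
  · exact Or.inl ⟨(a+1)/2, by omega, by omega, by omega, by omega⟩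
  · omega

end Stmt7Aux

lemma restrictG_adj (G : SimpleGraph ℕ) (k u v : ℕ) :
    (restrictG G k).Adj u v ↔ G.Adj u v ∧ u ≤ k ∧ v ≤ k := by
  unfold restrictG
  rw [SimpleGraph.fromRel_adj]
  constructor
  · rintro ⟨hne, (⟨h, h1, h2⟩ | ⟨h, h1, h2⟩)⟩
    · exact ⟨h, h1, h2⟩
    · exact ⟨h.symm, h2, h1⟩
  · rintro ⟨h, h1, h2⟩
    exact ⟨G.ne_of_adj h, Or.inl ⟨h, h1, h2⟩⟩

open Stmt7Aux in
/-- a graph `H'` on `[k]` is of the form `H[k]` for some matching `H` on `[2m]`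
with base `w` avoiding every `C_p` (`p ≥ 3`) iff (a) `H'` is consistent with `w`,
(b) `H'` avoids every `C_p`, and (c) for every `p ≥ 3` there is no increasing sequence
`x_1 < … < x_{2p-1}` in `[k]` with `x_{2p-3}` a stub whose induced subgraph has exactly
the edges `{x_{2i-1}, x_{2i+2}}` (`1 ≤ i ≤ p-2`) together with `{x_2, x_{2p-1}}`. -/
theorem stmt7 (m k : ℕ) (hm : 0 < m) (w : ℕ → Bool) (hw : IsDyckWord (2*m) w)
    (hk1 : 1 ≤ k) (hk : k ≤ 2*m) (H' : SimpleGraph ℕ)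
    (hH' : ∀ u v : ℕ, H'.Adj u v → 1 ≤ u ∧ u ≤ k ∧ 1 ≤ v ∧ v ≤ k) :
    (∃ H : SimpleGraph ℕ, IsMatchingOn (2*m) H ∧ HasBase (2*m) H w ∧
        (∀ p : ℕ, 3 ≤ p → ¬ ContainsPat H (Ck p)) ∧ restrictG H k = H') ↔
      ((∃ H : SimpleGraph ℕ, IsMatchingOn (2*m) H ∧ HasBase (2*m) H w ∧ restrictG H k = H') ∧
       (∀ p : ℕ, 3 ≤ p → ¬ ContainsPat H' (Ck p)) ∧
       (¬ ∃ p : ℕ, 3 ≤ p ∧ ∃ x : ℕ → ℕ,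
          (∀ i j : ℕ, 1 ≤ i → i < j → j ≤ 2*p - 1 → x i < x j) ∧
          (∀ i : ℕ, 1 ≤ i → i ≤ 2*p - 1 → 1 ≤ x i ∧ x i ≤ k) ∧
          IsStubOn k H' (x (2*p - 3)) ∧
          (∀ a b : ℕ, 1 ≤ a → a < b → b ≤ 2*p - 1 →
            (H'.Adj (x a) (x b) ↔
              ((∃ i : ℕ, 1 ≤ i ∧ i ≤ p - 2 ∧ a = 2*i - 1 ∧ b = 2*i + 2) ∨
               (a = 2 ∧ b = 2*p - 1)))))) := by
  constructor
  · rintro ⟨H, hM, hBase, hav, hR⟩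
    have hH'le : ∀ u v, H'.Adj u v → H.Adj u v := by
      intro u v h
      rw [← hR] at h
      exact ((restrictG_adj H k u v).1 h).1
    refine ⟨⟨H, hM, hBase, hR⟩, ?_, ?_⟩
    · -- (b)
      intro p hp hcon
      obtain ⟨f, hf, hfe⟩ := hcon
      exact hav p hp ⟨f, hf, fun u v huv => hH'le _ _ (hfe u v huv)⟩
    · -- (c)
      rintro ⟨p, hp, x, hmono, hrange, hstub, hiff⟩
      have hxb : 1 ≤ x (2*p - 3) ∧ x (2*p - 3) ≤ 2*m := ⟨hstub.1, le_trans hstub.2.1 hk⟩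
      obtain ⟨u₀, hu₀adj, hu₀uniq⟩ := hM.2 (x (2*p - 3)) hxb.1 hxb.2
      have hu₀k : k < u₀ := by
        by_contra h
        push_neg at h
        have : H'.Adj (x (2*p - 3)) u₀ := by
          rw [← hR, restrictG_adj]
          exact ⟨hu₀adj, hstub.2.1, h⟩
        exact hstub.2.2 u₀ this
      set f : ℕ → ℕ := fun i => if i = 0 then 0 else if i ≤ 2*p - 1 then x i else u₀ + (i - 2*p)
        with hfdef
      have hfx : ∀ i, 1 ≤ i → i ≤ 2*p - 1 → f i = x i := by
        intro i hi1 hi2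
        simp only [hfdef]
        rw [if_neg (by omega), if_pos hi2]
      have hf2p : f (2*p) = u₀ := by
        simp only [hfdef]
        rw [if_neg (by omega), if_neg (by omega)]
        omega
      have hfmono : StrictMono f := by
        apply strictMono_nat_of_lt_succ
        intro i
        by_cases hi0 : i = 0
        · subst hi0
          have h1 : f 0 = 0 := by simp [hfdef]
          have h2 : f (0+1) = x 1 := hfx 1 (le_refl 1) (by omega)
          have := (hrange 1 (le_refl 1) (by omega)).1
          omega
        by_cases hi1 : i + 1 ≤ 2*p - 1
        · rw [hfx i (by omega) (by omega), hfx (i+1) (by omega) hi1]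
          exact hmono i (i+1) (by omega) (by omega) hi1
        by_cases hi2 : i ≤ 2*p - 1
        · -- i = 2p - 1
          have h1 : f i = x i := hfx i (by omega) hi2
          have h2 : f (i+1) = u₀ + (i + 1 - 2*p) := by
            simp only [hfdef]
            rw [if_neg (by omega), if_neg (by omega)]
          have := (hrange i (by omega) hi2).2
          omega
        · have h1 : f i = u₀ + (i - 2*p) := by
            simp only [hfdef]
            rw [if_neg hi0, if_neg hi2]
          have h2 : f (i+1) = u₀ + (i + 1 - 2*p) := by
            simp only [hfdef]
            rw [if_neg (by omega), if_neg (by omega)]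
          omega
      have hmain : ∀ s t, PatPair p s t → H.Adj (f s) (f t) := by
        intro s t hst
        rcases hst with ⟨i, hi1, hi2, rfl, rfl⟩ | ⟨rfl, rfl⟩
        · by_cases hip : i ≤ p - 2
          · have hx : H'.Adj (x (2*i - 1)) (x (2*i + 2)) :=
              (hiff (2*i - 1) (2*i + 2) (by omega) (by omega) (by omega)).2
                (Or.inl ⟨i, hi1, hip, rfl, rfl⟩)
            rw [hfx (2*i-1) (by omega) (by omega), hfx (2*i+2) (by omega) (by omega)]
            exact hH'le _ _ hx
          · have hie : i = p - 1 := by omega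
            have e1 : 2*i - 1 = 2*p - 3 := by omega
            have e2 : 2*i + 2 = 2*p := by omega
            rw [e1, e2, hf2p, hfx (2*p-3) (by omega) (by omega)]
            exact hu₀adj
        · have hx : H'.Adj (x 2) (x (2*p - 1)) :=
            (hiff 2 (2*p - 1) (by omega) (by omega) (by omega)).2 (Or.inr ⟨rfl, rfl⟩)
          rw [hfx 2 (by omega) (by omega), hfx (2*p-1) (by omega) (by omega)]
          exact hH'le _ _ hx
      apply hav p hp
      refine ⟨f, hfmono, ?_⟩
      intro u v huv
      rcases (ck_adj_iff p u v).1 huv with ⟨hne, h | h⟩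
      · exact hmain u v h
      · exact (hmain v u h).symm
  · rintro ⟨⟨H₀, hM0, hB0, hR0⟩, hbavoid, hc⟩
    classical
    have restr0 : ∀ u v, H'.Adj u v ↔ H₀.Adj u v ∧ u ≤ k ∧ v ≤ k := by
      intro u v; rw [← hR0, restrictG_adj]
    -- the partner function of H₀
    have hprE : ∀ v : ℕ, ∃ u : ℕ,
        1 ≤ v → v ≤ 2*m → H₀.Adj v u ∧ ∀ u', H₀.Adj v u' → u' = u := by
      intro v
      by_cases h : 1 ≤ v ∧ v ≤ 2*m
      · obtain ⟨u, hu, huu⟩ := hM0.2 v h.1 h.2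
        exact ⟨u, fun _ _ => ⟨hu, huu⟩⟩
      · exact ⟨0, fun h1 h2 => absurd ⟨h1, h2⟩ h⟩
    choose pr hpr using hprE
    -- the two sides of the completion
    set A : Finset ℕ :=
      (Finset.Icc 1 (2*m)).filter (fun a => IsStubOn k H' a ∨ (k < a ∧ w a = false))
      with hAdef
    set B : Finset ℕ := (Finset.Icc 1 (2*m)).filter (fun b => k < b ∧ w b = true) with hBdef
    have hAmem : ∀ a, a ∈ A ↔
        (1 ≤ a ∧ a ≤ 2*m ∧ (IsStubOn k H' a ∨ (k < a ∧ w a = false))) := by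
      intro a
      rw [hAdef, Finset.mem_filter, Finset.mem_Icc]
      tauto
    have hBmem : ∀ b, b ∈ B ↔ (1 ≤ b ∧ b ≤ 2*m ∧ k < b ∧ w b = true) := by
      intro b
      rw [hBdef, Finset.mem_filter, Finset.mem_Icc]
      tauto
    have hA1 : ∀ a ∈ A, 1 ≤ a := fun a ha => ((hAmem a).1 ha).1
    have hB1 : ∀ b ∈ B, 1 ≤ b := fun b hb => ((hBmem b).1 hb).1
    have hd : Disjoint A B := by
      rw [Finset.disjoint_left]
      intro a ha hb
      rw [hAmem] at ha
      rw [hBmem] at hb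
      rcases ha.2.2 with hs | hw
      · have := hs.2.1; have := hb.2.2.1; omega
      · have h1 := hw.2
        have h2 := hb.2.2.2
        rw [h1] at h2
        exact Bool.noConfusion h2
    -- partner maps B into A and A into B
    have hprB : ∀ b ∈ B, pr b ∈ A ∧ pr b < b := by
      intro b hb
      rw [hBmem] at hb
      obtain ⟨hb1, hb2, hbk, hbw⟩ := hb
      obtain ⟨hadj, huniq⟩ := hpr b hb1 hb2
      obtain ⟨j, hj, hjadj⟩ := (hB0 b hb1 hb2).1 hbw
      have hjpr : j = pr b := huniq j hjadj
      have hlt : pr b < b := by omega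
      have hbd := hM0.1 b (pr b) hadj
      obtain ⟨hadj', huniq'⟩ := hpr (pr b) hbd.2.2.1 hbd.2.2.2
      have hbpr : b = pr (pr b) := huniq' b hadj.symm
      have hwpr : w (pr b) = false := by
        by_contra hww
        rw [Bool.not_eq_false] at hww
        obtain ⟨j', hj', hjadj'⟩ := (hB0 (pr b) hbd.2.2.1 hbd.2.2.2).1 hww
        have : j' = pr (pr b) := huniq' j' hjadj'
        omega
      refine ⟨(hAmem (pr b)).2 ⟨hbd.2.2.1, hbd.2.2.2, ?_⟩, hlt⟩
      by_cases hk' : pr b ≤ k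
      · left
        refine ⟨hbd.2.2.1, hk', ?_⟩
        intro u hu
        have h1 := (restr0 (pr b) u).1 hu
        have h2 : u = pr (pr b) := huniq' u h1.1
        omega
      · right; exact ⟨by omega, hwpr⟩
    have hprA : ∀ a ∈ A, pr a ∈ B ∧ a < pr a := by
      intro a ha
      rw [hAmem] at ha
      obtain ⟨ha1, ha2, hcase⟩ := ha
      obtain ⟨hadj, huniq⟩ := hpr a ha1 ha2
      have hbd := hM0.1 a (pr a) hadj
      have hane : a ≠ pr a := H₀.ne_of_adj hadj
      have hwa : w a = false := by
        rcases hcase with hs | hf'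
        · by_contra hww
          rw [Bool.not_eq_false] at hww
          obtain ⟨j, hj, hjadj⟩ := (hB0 a ha1 ha2).1 hww
          exact hs.2.2 j ((restr0 a j).2 ⟨hjadj, hs.2.1, by have := hs.2.1; omega⟩)
        · exact hf'.2
      have hnosmall : ¬ ∃ j, j < a ∧ H₀.Adj a j := by
        intro hex
        have := (hB0 a ha1 ha2).2 hex
        rw [hwa] at this
        exact Bool.noConfusion this
      have halt : a < pr a := by
        rcases Nat.lt_trichotomy a (pr a) with h | h | h
        · exact h
        · omega
        · exact absurd ⟨pr a, h, hadj⟩ hnosmall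
      have hprk : k < pr a := by
        rcases hcase with hs | hf'
        · by_contra hkk
          push_neg at hkk
          exact hs.2.2 (pr a) ((restr0 a (pr a)).2 ⟨hadj, hs.2.1, hkk⟩)
        · omega
      have hwpr : w (pr a) = true :=
        (hB0 (pr a) hbd.2.2.1 hbd.2.2.2).2 ⟨a, halt, hadj.symm⟩
      exact ⟨(hBmem (pr a)).2 ⟨hbd.2.2.1, hbd.2.2.2, hprk, hwpr⟩, halt⟩
    have hprinj : ∀ u v, 1 ≤ u → u ≤ 2*m → 1 ≤ v → v ≤ 2*m → pr u = pr v → u = v := by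
      intro u v h1 h2 h3 h4 he
      have hau := (hpr u h1 h2).1
      have hav := (hpr v h3 h4).1
      rw [he] at hau
      have hb1 := hM0.1 v (pr v) hav
      obtain ⟨_, huniq⟩ := hpr (pr v) hb1.2.2.1 hb1.2.2.2
      have e1 : u = pr (pr v) := huniq u hau.symm
      have e2 : v = pr (pr v) := huniq v hav.symm
      omega
    have hdom : ∀ t, Stmt7Aux.cnt B t ≤ Stmt7Aux.cnt A t := by
      intro t
      unfold Stmt7Aux.cnt
      apply Finset.card_le_card_of_injOn pr
      · intro b hb
        rw [Finset.mem_coe, Finset.mem_filter] at hb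
        rw [Finset.mem_coe, Finset.mem_filter]
        have h1 := hprB b hb.1
        have h2 := hb.2
        exact ⟨h1.1, by omega⟩
      · intro b1 h1 b2 h2 he
        rw [Finset.mem_coe, Finset.mem_filter] at h1 h2
        have m1 := (hBmem b1).1 h1.1
        have m2 := (hBmem b2).1 h2.1
        exact hprinj b1 b2 m1.1 m1.2.1 m2.1 m2.2.1 he
    have hcards : A.card = B.card := by
      apply le_antisymm
      · apply Finset.card_le_card_of_injOn pr
        · intro a ha; exact (hprA a ha).1
        · intro a1 h1 a2 h2 he
          rw [Finset.mem_coe] at h1 h2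
          have m1 := (hAmem a1).1 h1
          have m2 := (hAmem a2).1 h2
          exact hprinj a1 a2 m1.1 m1.2.1 m2.1 m2.2.1 he
      · apply Finset.card_le_card_of_injOn pr
        · intro b hb; exact (hprB b hb).1
        · intro b1 h1 b2 h2 he
          rw [Finset.mem_coe] at h1 h2
          have m1 := (hBmem b1).1 h1
          have m2 := (hBmem b2).1 h2
          exact hprinj b1 b2 m1.1 m1.2.1 m2.1 m2.2.1 he
    -- the canonical nested completion
    have hsigE : ∀ b : ℕ, ∃ a : ℕ, b ∈ B →
        (a ∈ A ∧ a < b ∧ Stmt7Aux.hgt A B (a-1) = Stmt7Aux.hgt A B b ∧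
          ∀ t, a ≤ t → t < b → Stmt7Aux.hgt A B b < Stmt7Aux.hgt A B t) := by
      intro b
      by_cases hb : b ∈ B
      · obtain ⟨a, h⟩ := Stmt7Aux.exists_match A B hA1 hB1 hd hdom hb
        exact ⟨a, fun _ => h⟩
      · exact ⟨0, fun h => absurd h hb⟩
    choose σ hσ using hsigE
    have hσA : ∀ b ∈ B, σ b ∈ A := fun b hb => (hσ b hb).1
    have hσlt : ∀ b ∈ B, σ b < b := fun b hb => (hσ b hb).2.1
    have hσinj : ∀ b1 ∈ B, ∀ b2 ∈ B, σ b1 = σ b2 → b1 = b2 := by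
      have key : ∀ c1 ∈ B, ∀ c2 ∈ B, σ c1 = σ c2 → c1 < c2 → False := by
        intro c1 h1 c2 h2 he hlt
        have g2 := (hσ c2 h2).2.2.2 c1 (by rw [← he]; exact le_of_lt (hσlt c1 h1)) hlt
        have e1 := (hσ c1 h1).2.2.1
        have e2 := (hσ c2 h2).2.2.1
        rw [he] at e1
        omega
      intro b1 h1 b2 h2 he
      rcases Nat.lt_trichotomy b1 b2 with h | h | h
      · exact absurd (key b1 h1 b2 h2 he h) not_false
      · exact h
      · exact absurd (key b2 h2 b1 h1 he.symm h) not_false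
    have hσsurj : ∀ a ∈ A, ∃ b, b ∈ B ∧ σ b = a := by
      have himg : B.image σ = A := by
        apply Finset.eq_of_subset_of_card_le
        · intro a ha
          obtain ⟨b, hb, rfl⟩ := Finset.mem_image.1 ha
          exact hσA b hb
        · rw [Finset.card_image_of_injOn]
          · exact le_of_eq hcards
          · intro b1 h1 b2 h2 he
            exact hσinj b1 (Finset.mem_coe.1 h1) b2 (Finset.mem_coe.1 h2) he
      intro a ha
      rw [← himg] at ha
      obtain ⟨b, hb, hba⟩ := Finset.mem_image.1 ha
      exact ⟨b, hb, hba⟩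
    -- the completed matching
    set H : SimpleGraph ℕ :=
      SimpleGraph.fromRel (fun u v => H'.Adj u v ∨ (v ∈ B ∧ u = σ v)) with hHdef
    have hHadj : ∀ u v, H.Adj u v ↔
        u ≠ v ∧ (H'.Adj u v ∨ (u ∈ B ∧ v = σ u) ∨ (v ∈ B ∧ u = σ v)) := by
      intro u v
      rw [hHdef, SimpleGraph.fromRel_adj]
      constructor
      · rintro ⟨hne, (h | h) | (h | h)⟩
        · exact ⟨hne, Or.inl h⟩
        · exact ⟨hne, Or.inr (Or.inr h)⟩
        · exact ⟨hne, Or.inl h.symm⟩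
        · exact ⟨hne, Or.inr (Or.inl h)⟩
      · rintro ⟨hne, h | h | h⟩
        · exact ⟨hne, Or.inl (Or.inl h)⟩
        · exact ⟨hne, Or.inr (Or.inr h)⟩
        · exact ⟨hne, Or.inl (Or.inr h)⟩
    have hH'le : ∀ u v, H'.Adj u v → H.Adj u v := fun u v h =>
      (hHadj u v).2 ⟨H'.ne_of_adj h, Or.inl h⟩
    have hstubA : ∀ a ∈ A, a ≤ k → IsStubOn k H' a := by
      intro a ha hak
      rcases ((hAmem a).1 ha).2.2 with h | h
      · exact h
      · omega
    have hBk : ∀ b ∈ B, k < b := fun b hb => ((hBmem b).1 hb).2.2.1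
    have hAnoH' : ∀ a ∈ A, ∀ u, ¬ H'.Adj a u := by
      intro a ha u hadj
      rcases ((hAmem a).1 ha).2.2 with h | h
      · exact h.2.2 u hadj
      · have := (hH' a u hadj).2.1; omega
    have hBnoH' : ∀ b ∈ B, ∀ u, ¬ H'.Adj b u := by
      intro b hb u hadj
      have := (hH' b u hadj).2.1
      have := hBk b hb
      omega
    -- unique neighbours in H
    have hnbr : ∀ v, 1 ≤ v → v ≤ 2*m → ∃! u, H.Adj v u := by
      intro v h1 h2
      by_cases hvB : v ∈ B
      · refine ⟨σ v, (hHadj v (σ v)).2 ⟨by have := hσlt v hvB; omega,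
          Or.inr (Or.inl ⟨hvB, rfl⟩)⟩, ?_⟩
        intro u hu
        rcases (hHadj v u).1 hu with ⟨hne, h | h | h⟩
        · exact absurd h (hBnoH' v hvB u)
        · exact h.2
        · exact absurd (Finset.disjoint_left.1 hd (h.2 ▸ hσA u h.1)) (fun hf => hf hvB)
      by_cases hvA : v ∈ A
      · obtain ⟨b, hbB, hbσ⟩ := hσsurj v hvA
        refine ⟨b, (hHadj v b).2 ⟨by have := hσlt b hbB; omega,
          Or.inr (Or.inr ⟨hbB, hbσ.symm⟩)⟩, ?_⟩
        intro u hu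
        rcases (hHadj v u).1 hu with ⟨hne, h | h | h⟩
        · exact absurd h (hAnoH' v hvA u)
        · exact absurd h.1 (Finset.disjoint_left.1 hd hvA)
        · exact hσinj u h.1 b hbB (by rw [← h.2, hbσ])
      · have hvk : v ≤ k := by
          by_contra h
          cases hww : w v with
          | true => exact hvB ((hBmem v).2 ⟨h1, h2, by omega, hww⟩)
          | false => exact hvA ((hAmem v).2 ⟨h1, h2, Or.inr ⟨by omega, hww⟩⟩)
        have hvstub : ¬ IsStubOn k H' v := fun h => hvA ((hAmem v).2 ⟨h1, h2, Or.inl h⟩)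
        have hex : ∃ u, H'.Adj v u := by
          by_contra h
          push_neg at h
          exact hvstub ⟨h1, hvk, h⟩
        obtain ⟨u, hu⟩ := hex
        refine ⟨u, hH'le v u hu, ?_⟩
        intro u' hu'
        rcases (hHadj v u').1 hu' with ⟨hne, h | h | h⟩
        · have e1 := ((restr0 v u').1 h).1
          have e2 := ((restr0 v u).1 hu).1
          have hun := (hpr v h1 h2).2
          rw [hun u' e1, hun u e2]
        · exact absurd h.1 hvB
        · exact absurd (h.2 ▸ hσA u' h.1) hvA
    have hMend : ∀ u v, H.Adj u v → 1 ≤ u ∧ u ≤ 2*m ∧ 1 ≤ v ∧ v ≤ 2*m := by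
      intro u v huv
      rcases (hHadj u v).1 huv with ⟨hne, h | h | h⟩
      · have := hH' u v h; omega
      · have m1 := (hBmem u).1 h.1
        have m2 := (hAmem (σ u)).1 (hσA u h.1)
        rw [← h.2] at m2
        omega
      · have m1 := (hBmem v).1 h.1
        have m2 := (hAmem (σ v)).1 (hσA v h.1)
        rw [← h.2] at m2
        omega
    have hMatch : IsMatchingOn (2*m) H := ⟨hMend, hnbr⟩
    -- base
    have hBase : HasBase (2*m) H w := by
      intro i h1 h2
      by_cases hiB : i ∈ B
      · constructor
        · intro _
          exact ⟨σ i, hσlt i hiB, (hHadj i (σ i)).2 ⟨by have := hσlt i hiB; omega,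
            Or.inr (Or.inl ⟨hiB, rfl⟩)⟩⟩
        · intro _; exact ((hBmem i).1 hiB).2.2.2
      by_cases hiA : i ∈ A
      · have hwi : w i = false := by
          rcases ((hAmem i).1 hiA).2.2 with hs | hf'
          · by_contra hww
            rw [Bool.not_eq_false] at hww
            obtain ⟨j, hj, hjadj⟩ := (hB0 i h1 h2).1 hww
            exact hs.2.2 j ((restr0 i j).2 ⟨hjadj, hs.2.1, by have := hs.2.1; omega⟩)
          · exact hf'.2
        rw [hwi]
        simp only [Bool.false_eq_true, false_iff]
        rintro ⟨j, hj, hadj⟩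
        obtain ⟨b, hbB, hbσ⟩ := hσsurj i hiA
        obtain ⟨u, hu, huuniq⟩ := hnbr i h1 h2
        have e1 : j = u := huuniq j hadj
        have e2 : b = u := huuniq b ((hHadj i b).2 ⟨by have := hσlt b hbB; omega,
          Or.inr (Or.inr ⟨hbB, hbσ.symm⟩)⟩)
        have e3 : i < b := by have := hσlt b hbB; omega
        omega
      · have hvk : i ≤ k := by
          by_contra h
          cases hww : w i with
          | true => exact hiB ((hBmem i).2 ⟨h1, h2, by omega, hww⟩)
          | false => exact hiA ((hAmem i).2 ⟨h1, h2, Or.inr ⟨by omega, hww⟩⟩)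
        have hex : ∃ u, H'.Adj i u := by
          by_contra h
          push_neg at h
          exact hiA ((hAmem i).2 ⟨h1, h2, Or.inl ⟨h1, hvk, h⟩⟩)
        obtain ⟨u, hu⟩ := hex
        have hun := (hpr i h1 h2).2
        have e2 : u = pr i := hun u ((restr0 i u).1 hu).1
        constructor
        · intro hww
          obtain ⟨j, hj, hjadj⟩ := (hB0 i h1 h2).1 hww
          have e1 : j = pr i := hun j hjadj
          exact ⟨u, by omega, hH'le i u hu⟩
        · rintro ⟨j, hj, hadj⟩
          obtain ⟨u', hu', huuniq⟩ := hnbr i h1 h2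
          have e1 : j = u' := huuniq j hadj
          have e3 : u = u' := huuniq u (hH'le i u hu)
          exact (hB0 i h1 h2).2 ⟨u, by omega, ((restr0 i u).1 hu).1⟩
    -- restriction
    have hrest : restrictG H k = H' := by
      ext u v
      rw [restrictG_adj]
      constructor
      · rintro ⟨hadj, hu1, hv1⟩
        rcases (hHadj u v).1 hadj with ⟨hne, h | h | h⟩
        · exact h
        · have := hBk u h.1; omega
        · have := hBk v h.1; omega
      · intro h
        exact ⟨hH'le u v h, (hH' u v h).2.1, (hH' u v h).2.2.2⟩
    -- the key crossing lemma
    have keylem : ∀ b ∈ B, ∀ x y, H.Adj x y → x < y → σ b < x → x < b → b < y → False := by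
      intro b hb x y hadj hxy hx1 hx2 hy1
      have hyk : k < y := by have := hBk b hb; omega
      have hnew : y ∈ B ∧ x = σ y := by
        rcases (hHadj x y).1 hadj with ⟨hne, h | h | h⟩
        · have := (hH' x y h).2.2.2; omega
        · have := hσlt x h.1; omega
        · exact ⟨h.1, h.2⟩
      obtain ⟨hyB, hxσ⟩ := hnew
      have hσy1 : 1 ≤ σ y := hA1 _ (hσA y hyB)
      have e1 : Stmt7Aux.hgt A B (σ y - 1) = Stmt7Aux.hgt A B y := (hσ y hyB).2.2.1
      have g1 := (hσ b hb).2.2.2 (σ y - 1) (by omega) (by omega)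
      have g2 := (hσ y hyB).2.2.2 b (by omega) hy1
      omega
    -- avoidance
    have havoid : ∀ p : ℕ, 3 ≤ p → ¬ ContainsPat H (Ck p) := by
      intro p hp hcon
      obtain ⟨f, hf, hfe⟩ := hcon
      have hHedge : ∀ s t, PatPair p s t → H.Adj (f s) (f t) := fun s t h =>
        hfe s t (ck_adj hp h)
      have hold : ∀ s t, PatPair p s t → ¬(s = 2*p - 3 ∧ t = 2*p) → H'.Adj (f s) (f t) := by
        intro s t hst hne
        have hHst := hHedge s t hst
        have hlt := pat_lt hp hst
        rcases (hHadj (f s) (f t)).1 hHst with ⟨_, h | h | h⟩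
        · exact h
        · have h1 := hσlt (f s) h.1
          have h2 := hf hlt.2.1
          omega
        · obtain ⟨s', t', hst', hc1, hc2, hc3⟩ := pat_cross hp hst hne
          have hcross := hHedge s' t' hst'
          have hlt' := pat_lt hp hst'
          exact (keylem (f t) h.1 (f s') (f t') hcross (hf hlt'.2.1)
            (by rw [← h.2]; exact hf hc1) (hf hc2) (hf hc3)).elim
      have hlastP : PatPair p (2*p - 3) (2*p) :=
        Or.inl ⟨p - 1, by omega, by omega, by omega, by omega⟩
      have hlast := hHedge _ _ hlastP
      rcases (hHadj (f (2*p - 3)) (f (2*p))).1 hlast with ⟨_, hO | hN | hN⟩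
      · -- all edges land in H' : contradiction with (b)
        apply hbavoid p hp
        refine ⟨f, hf, ?_⟩
        have hmain : ∀ s t, PatPair p s t → H'.Adj (f s) (f t) := by
          intro s t hst
          by_cases he : s = 2*p - 3 ∧ t = 2*p
          · rw [he.1, he.2]; exact hO
          · exact hold s t hst he
        intro u v huv
        rcases (ck_adj_iff p u v).1 huv with ⟨hne, h | h⟩
        · exact hmain u v h
        · exact (hmain v u h).symm
      · -- impossible orientation
        have h1 := hσlt (f (2*p - 3)) hN.1
        have h2 := hf (show 2*p - 3 < 2*p by omega)
        have h3 := hN.2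
        omega
      · -- the last edge is new : contradiction with (c)
        apply hc
        have h2' : H'.Adj (f 2) (f (2*p - 1)) :=
          hold 2 (2*p - 1) (Or.inr ⟨rfl, rfl⟩) (by omega)
        have h1' : H'.Adj (f 1) (f 4) :=
          hold 1 4 (Or.inl ⟨1, le_refl 1, by omega, by omega, by omega⟩) (by omega)
        have hfk : ∀ i, i ≤ 2*p - 1 → f i ≤ k := by
          intro i hi
          calc f i ≤ f (2*p - 1) := hf.monotone hi
            _ ≤ k := (hH' _ _ h2').2.2.2
        refine ⟨p, hp, f, fun i j _ hij _ => hf hij, ?_, ?_, ?_⟩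
        · intro i hi1 hi2
          constructor
          · calc 1 ≤ f 1 := (hH' _ _ h1').1
              _ ≤ f i := hf.monotone hi1
          · exact hfk i hi2
        · have hmemA : f (2*p - 3) ∈ A := by rw [hN.2]; exact hσA _ hN.1
          exact hstubA _ hmemA (hfk (2*p - 3) (by omega))
        · intro a b ha1 hab hb2
          constructor
          · intro hadj
            have hHab : H.Adj (f a) (f b) := hH'le _ _ hadj
            have hppa := patPartner_adj hp ha1 (by omega)
            have hCk : (Ck p).Adj a (patPartner p a) := by
              rcases hppa with h | h
              · exact ck_adj hp h
              · exact (ck_adj hp h).symm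
            have hH2 : H.Adj (f a) (f (patPartner p a)) := hfe _ _ hCk
            have hfab := hMend _ _ hHab
            obtain ⟨u, hu, huniq⟩ := hnbr (f a) hfab.1 hfab.2.1
            have e1 := huniq _ hHab
            have e2 := huniq _ hH2
            have e3 : b = patPartner p a := hf.injective (e1.trans e2.symm)
            exact pat_unique hp ha1 hab hb2 e3
          · rintro (⟨i, hi1, hi2, rfl, rfl⟩ | ⟨rfl, rfl⟩)
            · exact hold _ _ (Or.inl ⟨i, hi1, by omega, rfl, rfl⟩) (by omega)
            · exact hold _ _ (Or.inr ⟨rfl, rfl⟩) (by omega)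
    exact ⟨H, hMatch, hBase, havoid, hrest⟩
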